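/- Let k ≥ 2, N ≥ 2k - 1, and τ(0) = # 0^{N-k} 0^{k-1}, τ(1) = # 0^{k-2} 1^{N-2k+2} 0^{k-1}. If a k-abelian power u_0 ... u_{e-1} with e ≥ N occurs in τ(w) for an infinite binary word w, then N divides |u_0|. -/

import Mathlib

/-- Abelian equivalence of words: each letter occurs equally often. -/
def AbEq {A : Type*} [DecidableEq A] (u v : List A) : Prop :=
  ∀ a : A, u.count a = v.count a

/-- `u` occurs as a (contiguous) factor of the infinite word `x`. -/
def OccursIn {A : Type*} (x : ℕ → A) (u : List A) : Prop :=
  ∃ i, u = (List.range u.length).map fun j => x (i + j)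

/-- The number of (possibly overlapping) occurrences of `z` as a factor of `u`. -/
def FactorCount {A : Type*} [DecidableEq A] (u z : List A) : ℕ :=
  (List.range (u.length + 1 - z.length)).countP fun i =>
    decide ((u.drop i).take z.length = z)

/-- `k`-abelian equivalence: every nonempty word of length at most `k` occurs
equally often as a factor of `u` and of `v`. -/
def KAbEq {A : Type*} [DecidableEq A] (k : ℕ) (u v : List A) : Prop :=
  ∀ z : List A, z ≠ [] → z.length ≤ k → FactorCount u z = FactorCount v z

/-- A `k`-abelian power of exponent `e` and period `m` occurs in `x`. -/
def IsKAbPow {A : Type*} [DecidableEq A] (x : ℕ → A) (k e m : ℕ) : Prop :=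
  0 < e ∧ 0 < m ∧ ∃ u : ℕ → List A,
    (∀ i < e, (u i).length = m) ∧
    (∀ i < e, KAbEq k (u i) (u 0)) ∧
    OccursIn x (((List.range e).map u).flatten)

/-- The `N`-uniform substitution `τ(0) = # 0^{N-k} 0^{k-1}`,
`τ(1) = # 0^{k-2} 1^{N-2k+2} 0^{k-1}`, with `# = 2` in `Fin 3`. -/
def tauLetter (k N : ℕ) (a : Fin 2) : List (Fin 3) :=
  if a = 0 then
    (2 : Fin 3) :: (List.replicate (N - k) 0 ++ List.replicate (k - 1) 0)
  else
    (2 : Fin 3) :: (List.replicate (k - 2) 0 ++ List.replicate (N + 2 - 2 * k) 1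
      ++ List.replicate (k - 1) 0)

/-- `τ(w)`, applying `τ` letterwise to the infinite binary word `w`. -/
def tauWord (k N : ℕ) (w : ℕ → Fin 2) (n : ℕ) : Fin 3 :=
  (tauLetter k N (w (n / N))).getD (n % N) 0

/-!
A `k`-abelian power is in particular abelian, so its `e` blocks all contain the same number `c`
of markers `#`. In `τ(w)` the marker sits exactly at the positions divisible by `N`, so a factor
of length `L` contains `⌊L/N⌋` or `⌈L/N⌉` markers: `N` times its marker count is within `N` of
`L`. For the whole power this gives `|e·N·c - e·m| < N ≤ e`, hence `m = N·c`.
-/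

theorem factorCount_singleton {A : Type*} [DecidableEq A] (v : List A) (a : A) :
    FactorCount v [a] = v.count a := by
  induction v with
  | nil => rfl
  | cons b v ih =>
    simp only [FactorCount, List.length_cons, List.length_nil, Nat.add_sub_cancel] at ih ⊢
    rw [List.range_succ_eq_map, List.countP_cons, List.countP_map, List.count_cons, ← ih]
    simp [Function.comp_def]

theorem KAbEq.abEq {A : Type*} [DecidableEq A] {k : ℕ} {u v : List A} (hk : 1 ≤ k)
    (h : KAbEq k u v) : AbEq u v := fun a => by
  simpa only [factorCount_singleton] using h [a] (List.cons_ne_nil a []) hk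

theorem List.sum_map_range_of_forall_eq {f : ℕ → ℕ} {e c : ℕ} (h : ∀ i < e, f i = c) :
    ((List.range e).map f).sum = e * c := by
  rw [List.map_congr_left (g := fun _ => c) fun i hi => h i (List.mem_range.mp hi),
    List.map_const', List.sum_replicate, List.length_range, smul_eq_mul]

section Power

variable {A : Type*} {u : ℕ → List A} {e : ℕ}

theorem length_flatten_map_range {m : ℕ} (hlen : ∀ i < e, (u i).length = m) :
    ((List.range e).map u).flatten.length = e * m := by
  rw [List.length_flatten, List.map_map]
  exact List.sum_map_range_of_forall_eq hlen

theorem count_flatten_map_range [DecidableEq A] (hab : ∀ i < e, AbEq (u i) (u 0)) (a : A) :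
    ((List.range e).map u).flatten.count a = e * (u 0).count a := by
  rw [List.count_flatten, List.map_map]
  exact List.sum_map_range_of_forall_eq fun i hi => hab i hi a

end Power

theorem Nat.count_dvd_bounds {N : ℕ} (hN : 0 < N) (b : ℕ) :
    b ≤ N * Nat.count (N ∣ ·) b ∧ N * Nat.count (N ∣ ·) b < b + N := by
  have hcount := Nat.count_modEq_card b hN 0
  simp only [Nat.modEq_zero_iff_dvd, Nat.zero_mod] at hcount
  have hdiv := Nat.div_add_mod b N
  have hmod := Nat.mod_lt b hN
  rw [hcount, mul_add]
  generalize N * (b / N) = q at hdiv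
  by_cases h0 : 0 < b % N <;> simp only [h0, if_true, if_false] <;> omega

theorem Nat.count_dvd_add_bounds {N : ℕ} (hN : 0 < N) (a L : ℕ) :
    L < N * Nat.count (fun t => N ∣ a + t) L + N ∧
      N * Nat.count (fun t => N ∣ a + t) L < L + N := by
  have hsplit := Nat.count_add (N ∣ ·) a L
  obtain ⟨h₁, h₂⟩ := Nat.count_dvd_bounds hN a
  obtain ⟨h₃, h₄⟩ := Nat.count_dvd_bounds hN (a + L)
  rw [hsplit, mul_add] at h₃ h₄
  omega

theorem eq_of_mul_lt_mul_add {e m c N : ℕ} (hN : N ≤ e) (h₁ : e * m < e * c + N)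
    (h₂ : e * c < e * m + N) : m = c := by
  rcases lt_trichotomy m c with h | h | h
  · nlinarith
  · exact h
  · nlinarith

theorem tauLetter_eq_cons (k N : ℕ) (a : Fin 2) :
    ∃ rest, 2 ∉ rest ∧ tauLetter k N a = 2 :: rest := by
  unfold tauLetter
  split_ifs
  · exact ⟨_, by simp, rfl⟩
  · exact ⟨_, by simp, rfl⟩

theorem tauWord_eq_two_iff (k N : ℕ) (w : ℕ → Fin 2) (n : ℕ) :
    tauWord k N w n = 2 ↔ N ∣ n := by
  obtain ⟨rest, hrest, heq⟩ := tauLetter_eq_cons k N (w (n / N))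
  rw [tauWord, heq, Nat.dvd_iff_mod_eq_zero]
  rcases n % N with _ | r
  · simp
  · simp only [List.getD_cons_succ, Nat.succ_ne_zero, iff_false]
    rw [List.getD_eq_getElem?_getD]
    cases hr : rest[r]? with
    | none => decide
    | some x => exact fun hx => hrest (hx ▸ List.mem_of_getElem? hr)

theorem count_two_tauWord_window (k N : ℕ) (w : ℕ → Fin 2) (a L : ℕ) :
    ((List.range L).map fun t => tauWord k N w (a + t)).count 2 =
      Nat.count (fun t => N ∣ a + t) L := by
  rw [List.count_eq_countP, List.countP_map, Nat.count]
  exact List.countP_congr fun t _ => by simp [tauWord_eq_two_iff]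

/-- If a `k`-abelian power of exponent `e ≥ N` and period `m` occurs in `τ(w)`,
then `N` divides `m`. -/
theorem period_divisible_of_kAbelian_power_in_tau
    (k N : ℕ) (hk : 2 ≤ k) (hN : 2 * k - 1 ≤ N)
    (w : ℕ → Fin 2) (e m : ℕ) (he : N ≤ e)
    (h : IsKAbPow (tauWord k N w) k e m) :
    N ∣ m := by
  obtain ⟨-, -, u, hlen, hab, i, hocc⟩ := h
  have hN₀ : 0 < N := by omega
  set c := (u 0).count 2
  have hcount : e * c = Nat.count (fun t => N ∣ i + t) (e * m) := by
    rw [← count_flatten_map_range (fun j hj => (hab j hj).abEq (by omega)), hocc,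
      length_flatten_map_range hlen, count_two_tauWord_window]
  obtain ⟨h₁, h₂⟩ := Nat.count_dvd_add_bounds hN₀ i (e * m)
  rw [← hcount] at h₁ h₂
  exact ⟨c, eq_of_mul_lt_mul_add he (by linarith) (by linarith)⟩
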